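/- arXiv:1809.07344 — 2 statements merged into one kernel-verified Lean document; each statement's English description precedes it below -/
import Mathlib

section
/- For every natural number n, every real number t > 0, and all real numbers c₀,…,cₙ: (n+1) · ∫₀^∞ (Σ_{i=0}^n binom(n,i)·c_{n−i}·sⁱ) · t^(n+1)/(1+s·t)^(n+2) ds = Σ_{j=0}^n c_j·t^j. -/
/-!
Substituting `u = s * t` turns the `i`-th monomial into the beta integral
`∫₀^∞ uⁱ / (1 + u)^(i+k+2) du = i! k! / (i+k+1)!` with `k = n - i`; this follows by induction
on `i`, integrating the derivative of `u^(i+1) / (1 + u)^(i+k+2)`, which vanishes at `0` and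
at `∞`. Since `(n+1) · binom(n,i) · i! (n-i)! = (n+1)!`, the `i`-th monomial then contributes
exactly `c_{n-i} t^{n-i}`.
-/

open MeasureTheory Set Finset Filter Topology
open scoped Nat

lemma pow_div_one_add_pow_le {u : ℝ} (hu : 0 ≤ u) (i k : ℕ) :
    u ^ i / (1 + u) ^ (i + k) ≤ ((1 + u) ^ k)⁻¹ := by
  have hle : u ^ i / (1 + u) ^ i ≤ 1 :=
    div_le_one_of_le₀ (pow_le_pow_left₀ hu (by linarith) i) (by positivity)
  calc u ^ i / (1 + u) ^ (i + k) = u ^ i / (1 + u) ^ i * ((1 + u) ^ k)⁻¹ := by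
        rw [pow_add, div_mul_eq_div_div, div_eq_mul_inv]
    _ ≤ ((1 + u) ^ k)⁻¹ := mul_le_of_le_one_left (by positivity) hle

lemma integrableOn_pow_div_one_add_pow (i k : ℕ) :
    IntegrableOn (fun u : ℝ ↦ u ^ i / (1 + u) ^ (i + k + 2)) (Ioi 0) := by
  refine integrable_inv_one_add_sq.integrableOn.mono'
    (Measurable.aestronglyMeasurable (by fun_prop)) ?_
  filter_upwards [ae_restrict_mem measurableSet_Ioi] with u (hu : 0 < u)
  rw [Real.norm_of_nonneg (by positivity)]
  calc u ^ i / (1 + u) ^ (i + (k + 2)) ≤ ((1 + u) ^ (k + 2))⁻¹ :=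
        pow_div_one_add_pow_le hu.le i (k + 2)
    _ ≤ (1 + u ^ 2)⁻¹ := by
        refine inv_anti₀ (by positivity) ?_
        calc 1 + u ^ 2 ≤ (1 + u) ^ 2 := by nlinarith
          _ ≤ (1 + u) ^ (k + 2) := pow_le_pow_right₀ (by linarith) (by omega)

lemma tendsto_pow_div_one_add_pow_atTop (j k : ℕ) :
    Tendsto (fun u : ℝ ↦ u ^ j / (1 + u) ^ (j + k + 1)) atTop (𝓝 0) := by
  have hinv : Tendsto (fun u : ℝ ↦ ((1 + u) ^ (k + 1))⁻¹) atTop (𝓝 0) :=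
    tendsto_inv_atTop_zero.comp <| (tendsto_pow_atTop k.succ_ne_zero).comp <|
      tendsto_atTop_add_const_left _ 1 tendsto_id
  refine squeeze_zero' ?_ ?_ hinv
  · filter_upwards [eventually_ge_atTop 0] with u hu using by positivity
  · filter_upwards [eventually_ge_atTop 0] with u hu using pow_div_one_add_pow_le hu j (k + 1)

lemma hasDerivAt_pow_div_one_add_pow (j k : ℕ) {x : ℝ} (hx : 0 ≤ x) :
    HasDerivAt (fun u : ℝ ↦ u ^ j / (1 + u) ^ (j + k + 1))
      (j * (x ^ (j - 1) / (1 + x) ^ (j + k + 1)) -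
        (j + k + 1) * (x ^ j / (1 + x) ^ (j + k + 2))) x := by
  have hx1 : 0 < 1 + x := by linarith
  refine ((hasDerivAt_pow j x).div (((hasDerivAt_id' x).const_add 1).fun_pow (j + k + 1))
    (by positivity)).congr_deriv ?_
  simp only [Nat.add_sub_cancel, mul_one]
  push_cast
  field_simp
  ring

lemma integral_Ioi_inv_one_add_pow (k : ℕ) :
    (k + 1 : ℝ) * ∫ u in Ioi (0 : ℝ), ((1 + u) ^ (k + 2))⁻¹ = 1 := by
  have hderiv (x : ℝ) (hx : x ∈ Set.Ici 0) : HasDerivAt (fun u : ℝ ↦ ((1 + u) ^ (k + 1))⁻¹)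
      (-((k + 1) * ((1 + x) ^ (k + 2))⁻¹)) x := by
    simpa using hasDerivAt_pow_div_one_add_pow 0 k hx
  have hint : IntegrableOn (fun u : ℝ ↦ ((1 + u) ^ (k + 2))⁻¹) (Ioi 0) := by
    simpa using integrableOn_pow_div_one_add_pow 0 k
  have hftc := integral_Ioi_of_hasDerivAt_of_tendsto' hderiv (hint.const_mul _).neg
    (by simpa using tendsto_pow_div_one_add_pow_atTop 0 k)
  rw [integral_neg, integral_const_mul] at hftc
  simpa using hftc

lemma integral_Ioi_pow_succ_div_one_add_pow (i k : ℕ) :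
    (i + k + 2 : ℝ) * ∫ u in Ioi (0 : ℝ), u ^ (i + 1) / (1 + u) ^ (i + 1 + k + 2) =
      (i + 1) * ∫ u in Ioi (0 : ℝ), u ^ i / (1 + u) ^ (i + k + 2) := by
  have hderiv (x : ℝ) (hx : x ∈ Set.Ici 0) :
      HasDerivAt (fun u : ℝ ↦ u ^ (i + 1) / (1 + u) ^ (i + 1 + k + 1))
        ((i + 1) * (x ^ i / (1 + x) ^ (i + k + 2)) -
          (i + k + 2) * (x ^ (i + 1) / (1 + x) ^ (i + 1 + k + 2))) x := by
    convert hasDerivAt_pow_div_one_add_pow (i + 1) k hx using 1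
    rw [show i + 1 + k + 1 = i + k + 2 by ring]
    push_cast
    ring
  have hint_i := integrableOn_pow_div_one_add_pow i k
  have hint_succ := integrableOn_pow_div_one_add_pow (i + 1) k
  have hftc := integral_Ioi_of_hasDerivAt_of_tendsto' hderiv
    ((hint_i.const_mul _).sub (hint_succ.const_mul _)) (tendsto_pow_div_one_add_pow_atTop (i + 1) k)
  rw [integral_sub (hint_i.const_mul _) (hint_succ.const_mul _), integral_const_mul,
    integral_const_mul] at hftc
  simp only [ne_eq, Nat.add_eq_zero_iff, one_ne_zero, and_false, not_false_eq_true, zero_pow,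
    add_zero, one_pow, div_one, sub_self] at hftc
  linarith

lemma integral_Ioi_pow_div_one_add_pow (i k : ℕ) :
    ∫ u in Ioi (0 : ℝ), u ^ i / (1 + u) ^ (i + k + 2) = i ! * k ! / (i + k + 1)! := by
  induction i with
  | zero =>
    have h := integral_Ioi_inv_one_add_pow k
    simp only [pow_zero, one_div, zero_add, Nat.factorial_zero, Nat.cast_one, one_mul,
      Nat.factorial_succ, Nat.cast_mul, Nat.cast_add]
    field_simp
    simpa [mul_comm] using h
  | succ i ih =>
    have h := integral_Ioi_pow_succ_div_one_add_pow i k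
    rw [ih] at h
    rw [show i + 1 + k + 1 = (i + k + 1) + 1 by ring, Nat.factorial_succ (i + k + 1),
      Nat.factorial_succ i]
    push_cast at h ⊢
    field_simp at h ⊢
    linear_combination h

lemma pow_div_one_add_mul_pow_eq {t : ℝ} (ht : t ≠ 0) (i m : ℕ) (s : ℝ) :
    s ^ i / (1 + s * t) ^ m = (t ^ i)⁻¹ * ((s * t) ^ i / (1 + s * t) ^ m) := by
  rw [mul_pow]
  field_simp

lemma integrableOn_pow_div_one_add_mul_pow {t : ℝ} (ht : 0 < t) {i n : ℕ} (hi : i ≤ n) :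
    IntegrableOn (fun s : ℝ ↦ s ^ i / (1 + s * t) ^ (n + 2)) (Ioi 0) := by
  obtain ⟨k, rfl⟩ := Nat.exists_eq_add_of_le hi
  simp_rw [pow_div_one_add_mul_pow_eq ht.ne']
  have h := (integrableOn_Ioi_comp_mul_right_iff (fun u ↦ u ^ i / (1 + u) ^ (i + k + 2)) 0 ht).2
    (by simpa using integrableOn_pow_div_one_add_pow i k)
  exact h.const_mul _

lemma add_one_mul_choose_mul_integral_Ioi_pow_div_one_add_mul_pow {t : ℝ} (ht : 0 < t)
    {i n : ℕ} (hi : i ≤ n) :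
    (n + 1 : ℝ) * n.choose i * ∫ s in Ioi (0 : ℝ), s ^ i / (1 + s * t) ^ (n + 2) =
      (t ^ (i + 1))⁻¹ := by
  obtain ⟨k, rfl⟩ := Nat.exists_eq_add_of_le hi
  simp_rw [pow_div_one_add_mul_pow_eq ht.ne']
  rw [integral_const_mul, integral_comp_mul_right_Ioi
    (fun u ↦ u ^ i / (1 + u) ^ (i + k + 2)) 0 ht, zero_mul, smul_eq_mul,
    integral_Ioi_pow_div_one_add_pow]
  have hchoose : ((i + k).choose i * i ! * k ! : ℝ) = (i + k)! := by
    have h := Nat.choose_mul_factorial_mul_factorial hi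
    rw [Nat.add_sub_cancel_left] at h
    exact_mod_cast h
  have hchoose_ne : ((i + k).choose i : ℝ) ≠ 0 := by
    exact_mod_cast (Nat.choose_pos hi).ne'
  rw [Nat.factorial_succ, Nat.cast_mul, ← hchoose]
  field_simp
  push_cast
  ring

/-- For every natural number `n`, every real `t > 0`, and all reals `c₀,…,cₙ`:
`(n+1) · ∫₀^∞ (Σ_{i=0}^n binom(n,i)·c_{n−i}·sⁱ) · t^(n+1)/(1+s·t)^(n+2) ds = Σ_{j=0}^n c_j·t^j`. -/
theorem weighted_beta_integral (n : ℕ) (t : ℝ) (ht : 0 < t) (c : ℕ → ℝ) :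
    (n + 1 : ℝ) * ∫ s in Ici (0 : ℝ),
        (∑ i ∈ range (n + 1), (n.choose i : ℝ) * c (n - i) * s ^ i) *
          t ^ (n + 1) / (1 + s * t) ^ (n + 2) =
      ∑ j ∈ range (n + 1), c j * t ^ j := by
  have hsplit : (fun s : ℝ ↦ (∑ i ∈ range (n + 1), (n.choose i : ℝ) * c (n - i) * s ^ i) *
        t ^ (n + 1) / (1 + s * t) ^ (n + 2)) =
      fun s ↦ ∑ i ∈ range (n + 1),
        c (n - i) * n.choose i * t ^ (n + 1) * (s ^ i / (1 + s * t) ^ (n + 2)) := by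
    ext s
    rw [sum_mul, sum_div]
    exact sum_congr rfl fun i _ ↦ by ring
  rw [integral_Ici_eq_integral_Ioi, hsplit, integral_finsetSum _ fun i hi ↦
    (integrableOn_pow_div_one_add_mul_pow ht (mem_range_succ_iff.mp hi)).const_mul _,
    mul_sum, ← sum_range_reflect (fun j ↦ c j * t ^ j)]
  refine sum_congr rfl fun i hi ↦ ?_
  have hi : i ≤ n := mem_range_succ_iff.mp hi
  have hpow : t ^ (n + 1) = t ^ (n - i) * t ^ (i + 1) := by rw [← pow_add]; congr 1; omega
  rw [Nat.add_sub_cancel, integral_const_mul]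
  calc (n + 1 : ℝ) * (c (n - i) * n.choose i * t ^ (n + 1) *
        ∫ s in Ioi (0 : ℝ), s ^ i / (1 + s * t) ^ (n + 2))
      = c (n - i) * t ^ (n - i) * t ^ (i + 1) * ((n + 1 : ℝ) * n.choose i *
        ∫ s in Ioi (0 : ℝ), s ^ i / (1 + s * t) ^ (n + 2)) := by rw [hpow]; ring
    _ = c (n - i) * t ^ (n - i) := by
      rw [add_one_mul_choose_mul_integral_Ioi_pow_div_one_add_mul_pow ht hi,
        mul_inv_cancel_right₀ (by positivity)]
end

section
/- Let I ⊆ ℂ[x₀,…,xₙ] be a homogeneous ideal generated by homogeneous polynomials of degree at most d, and let v be any function from the nonzero elements of ℂ[x₁,…,xₙ] to ℤⁿ. Let a, b be coprime positive integers with b > d·a, and set q = b/a. Define U_{a,b} := {(α, u) ∈ ℝⁿ × ℝ : u ∈ ℤ_{≥0}, α ∈ v((((I^a)_b)|_{x₀=1})^u \ {0})} and U_I := {(α, s, t) ∈ ℝⁿ × ℝ² : s, t ∈ ℤ_{≥0}, α ∈ v(((I^t)_s)|_{x₀=1} \ {0})}, and let H_q := {(α, s, t) ∈ ℝⁿ ×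 ℝ² : s = q·t}. Then the map (α, u) ↦ (α, b·u, a·u) is a bijection from U_{a,b} onto U_I ∩ H_q. -/
open MvPolynomial

/-- The degree-`s` homogeneous component of an ideal in `ℂ[x₀,…,xₙ]`,
as a `ℂ`-subspace of the polynomial ring. -/
noncomputable def idealComponent {n : ℕ} (I : Ideal (MvPolynomial (Fin (n + 1)) ℂ)) (s : ℕ) :
    Submodule ℂ (MvPolynomial (Fin (n + 1)) ℂ) :=
  I.restrictScalars ℂ ⊓ homogeneousSubmodule (Fin (n + 1)) ℂ s

/-- Setting `x₀ = 1`: the dehomogenization map `ℂ[x₀,…,xₙ] → ℂ[x₁,…,xₙ]`. -/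
noncomputable def dehom (n : ℕ) : MvPolynomial (Fin (n + 1)) ℂ →ₐ[ℂ] MvPolynomial (Fin n) ℂ :=
  aeval (Fin.cases 1 X)

/-!
If `J` is generated by forms of degree `≤ c ≤ s` and `K` by forms of degree `≤ c' ≤ s'`, then
`(J K)_{s+s'} = J_s K_{s'}`: a degree-`(s+s')` element of `J K` is a sum of components of
multiples `r g h` of generators, and the relevant component of `r` factors as a product of forms of
degrees `s - deg g` and `s' - deg h`. Since `I^a` is generated in degrees `≤ d a < b`, this gives
`(I^{a u})_{b u} = ((I^a)_b)^u`, so after setting `x₀ = 1` the slice `(s, t) = (b u, a u)` of `U_I`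
is exactly `U_{a,b}` at level `u`; coprimality of `a` and `b` puts every point of `U_I` on the
line `s = (b/a) t` at such a `(b u, a u)`.
-/

open scoped Pointwise

namespace MvPolynomial

variable {σ R : Type*} [CommSemiring R]

theorem homogeneousSubmodule_add (m n : ℕ) :
    homogeneousSubmodule σ R (m + n) = homogeneousSubmodule σ R m * homogeneousSubmodule σ R n := by
  rw [← homogeneousSubmodule_one_pow, pow_add, homogeneousSubmodule_one_pow,
    homogeneousSubmodule_one_pow]

theorem homogeneousComponent_add_mul_of_isHomogeneous {g : MvPolynomial σ R} {e : ℕ}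
    (hg : g.IsHomogeneous e) (k : ℕ) (r : MvPolynomial σ R) :
    homogeneousComponent (k + e) (r * g) = homogeneousComponent k r * g := by
  induction r using MvPolynomial.induction_on' with
  | monomial d c =>
    have hdg : (monomial d c * g).IsHomogeneous (d.degree + e) :=
      (isHomogeneous_monomial c rfl).mul hg
    rw [homogeneousComponent_of_mem hdg,
      homogeneousComponent_of_mem (isHomogeneous_monomial c rfl)]
    split_ifs <;> simp_all
  | add p q hp hq => simp only [add_mul, map_add, hp, hq]

noncomputable def degreePart (J : Ideal (MvPolynomial σ R)) (s : ℕ) :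
    Submodule R (MvPolynomial σ R) :=
  J.restrictScalars R ⊓ homogeneousSubmodule σ R s

theorem mul_mem_degreePart {J : Ideal (MvPolynomial σ R)} {g m : MvPolynomial σ R} {e k : ℕ}
    (hgJ : g ∈ J) (hg : g.IsHomogeneous e) (hm : m.IsHomogeneous k) :
    m * g ∈ degreePart J (k + e) :=
  ⟨J.mul_mem_left m hgJ, hm.mul hg⟩

theorem degreePart_mul_degreePart_le (J K : Ideal (MvPolynomial σ R)) (s s' : ℕ) :
    degreePart J s * degreePart K s' ≤ degreePart (J * K) (s + s') :=
  Submodule.mul_le.2 fun _ hx _ hy => ⟨Ideal.mul_mem_mul hx.1 hy.1, hx.2.mul hy.2⟩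

theorem degreePart_top_zero : degreePart (⊤ : Ideal (MvPolynomial σ R)) 0 = 1 := by
  rw [degreePart, Submodule.restrictScalars_top, top_inf_eq, homogeneousSubmodule_zero]

def IsGeneratedInDegreeLE (J : Ideal (MvPolynomial σ R)) (c : ℕ) : Prop :=
  ∃ S : Set (MvPolynomial σ R), (∀ f ∈ S, ∃ e ≤ c, f.IsHomogeneous e) ∧ J = Ideal.span S

namespace IsGeneratedInDegreeLE

variable {J K : Ideal (MvPolynomial σ R)} {c c' : ℕ}

theorem mul (hJ : IsGeneratedInDegreeLE J c) (hK : IsGeneratedInDegreeLE K c') :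
    IsGeneratedInDegreeLE (J * K) (c + c') := by
  obtain ⟨S, hS, rfl⟩ := hJ
  obtain ⟨T, hT, rfl⟩ := hK
  refine ⟨S * T, ?_, Ideal.span_mul_span' S T⟩
  rintro _ ⟨g, hg, h, hh, rfl⟩
  obtain ⟨e, he, hge⟩ := hS g hg
  obtain ⟨e', he', hhe'⟩ := hT h hh
  exact ⟨e + e', add_le_add he he', hge.mul hhe'⟩

theorem top : IsGeneratedInDegreeLE (⊤ : Ideal (MvPolynomial σ R)) 0 :=
  ⟨{1}, by simpa using isHomogeneous_one σ R, Ideal.span_singleton_one.symm⟩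

theorem pow (hJ : IsGeneratedInDegreeLE J c) : ∀ u : ℕ, IsGeneratedInDegreeLE (J ^ u) (c * u)
  | 0 => by rw [pow_zero, mul_zero, Ideal.one_eq_top]; exact top
  | u + 1 => (hJ.pow u).mul hJ

/-- After splitting off `g * h`, the remaining component of `r` is a product of forms of degrees
`s - e` and `s' - e'` by `homogeneousSubmodule_add`. -/
theorem homogeneousComponent_mul_mem {g h : MvPolynomial σ R} {e e' s s' : ℕ}
    (hgJ : g ∈ J) (hg : g.IsHomogeneous e) (hes : e ≤ s)
    (hhK : h ∈ K) (hh : h.IsHomogeneous e') (hes' : e' ≤ s') (r : MvPolynomial σ R) :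
    homogeneousComponent (s + s') (r * (g * h)) ∈ degreePart J s * degreePart K s' := by
  obtain ⟨k, rfl⟩ := Nat.exists_eq_add_of_le' hes
  obtain ⟨k', rfl⟩ := Nat.exists_eq_add_of_le' hes'
  have hdeg : k + e + (k' + e') = k + k' + (e + e') := by ring
  rw [hdeg, homogeneousComponent_add_mul_of_isHomogeneous (hg.mul hh)]
  have hr : homogeneousComponent (k + k') r ∈
      homogeneousSubmodule σ R k * homogeneousSubmodule σ R k' := by
    rw [← homogeneousSubmodule_add]
    exact homogeneousComponent_isHomogeneous _ _
  generalize homogeneousComponent (k + k') r = x at hr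
  induction hr using Submodule.mul_induction_on' with
  | mem_mul_mem m hm m' hm' =>
    rw [mul_mul_mul_comm]
    exact Submodule.mul_mem_mul (mul_mem_degreePart hgJ hg hm) (mul_mem_degreePart hhK hh hm')
  | add x _ y _ hx hy => rw [add_mul]; exact add_mem hx hy

theorem degreePart_mul (hJ : IsGeneratedInDegreeLE J c) (hK : IsGeneratedInDegreeLE K c')
    {s s' : ℕ} (hs : c ≤ s) (hs' : c' ≤ s') :
    degreePart (J * K) (s + s') = degreePart J s * degreePart K s' := by
  refine le_antisymm (fun p hp => ?_) (degreePart_mul_degreePart_le J K s s')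
  obtain ⟨S, hS, rfl⟩ := hJ
  obtain ⟨T, hT, rfl⟩ := hK
  have key : ∀ x ∈ Ideal.span (S * T), ∀ r, homogeneousComponent (s + s') (r * x) ∈
      degreePart (Ideal.span S) s * degreePart (Ideal.span T) s' := by
    intro x hx
    induction hx using Submodule.span_induction with
    | mem _ hx =>
      obtain ⟨g, hg, h, hh, rfl⟩ := hx
      obtain ⟨e, he, hge⟩ := hS g hg
      obtain ⟨e', he', hhe'⟩ := hT h hh
      exact homogeneousComponent_mul_mem (Ideal.subset_span hg) hge (he.trans hs)
        (Ideal.subset_span hh) hhe' (he'.trans hs')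
    | zero => simp
    | add x y _ _ hx hy => intro r; rw [mul_add, map_add]; exact add_mem (hx r) (hy r)
    | smul a x _ hx => intro r; rw [smul_eq_mul, ← mul_assoc]; exact hx (r * a)
  rw [← homogeneousComponent_eq_self hp.2, ← one_mul p]
  exact key p (Ideal.span_mul_span' S T ▸ hp.1) 1

theorem degreePart_pow (hJ : IsGeneratedInDegreeLE J c) {s : ℕ} (hs : c ≤ s) :
    ∀ u : ℕ, degreePart (J ^ u) (s * u) = degreePart J s ^ u
  | 0 => by rw [pow_zero, pow_zero, mul_zero, Ideal.one_eq_top, degreePart_top_zero]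
  | u + 1 => by
    rw [pow_succ, pow_succ, mul_add_one,
      degreePart_mul (hJ.pow u) hJ (Nat.mul_le_mul_right u hs) hs, degreePart_pow hJ hs u]

end IsGeneratedInDegreeLE

end MvPolynomial

theorem Nat.Coprime.exists_eq_mul_of_mul_eq_mul {a b s t : ℕ} (hab : a.Coprime b) (ha : 0 < a)
    (h : s * a = b * t) : ∃ u, s = b * u ∧ t = a * u := by
  obtain ⟨u, rfl⟩ := hab.dvd_of_dvd_mul_left ⟨s, by rw [← h, mul_comm]⟩
  refine ⟨u, Nat.eq_of_mul_eq_mul_left ha ?_, rfl⟩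
  rw [mul_comm, h]
  ring

theorem idealComponent_eq_degreePart {n : ℕ} (I : Ideal (MvPolynomial (Fin (n + 1)) ℂ)) (s : ℕ) :
    idealComponent I s = degreePart I s :=
  rfl

theorem graded_semigroup_slice_bijection_general (n d : ℕ)
    (I : Ideal (MvPolynomial (Fin (n + 1)) ℂ))
    (hI : ∃ S : Set (MvPolynomial (Fin (n + 1)) ℂ),
      (∀ f ∈ S, ∃ e ≤ d, f.IsHomogeneous e) ∧ I = Ideal.span S)
    (v : MvPolynomial (Fin n) ℂ → (Fin n → ℤ))
    (a b : ℕ) (ha : 0 < a) (hab : Nat.Coprime a b) (hq : d * a < b)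
    (L : Submodule ℂ (MvPolynomial (Fin n) ℂ))
    (hL : L = Submodule.map (dehom n).toLinearMap (idealComponent (I ^ a) b))
    (Uab : Set ((Fin n → ℝ) × ℝ))
    (hUab : Uab = {p | ∃ u : ℕ, ∃ α ∈ v ''
        (((L ^ u : Submodule ℂ (MvPolynomial (Fin n) ℂ)) : Set (MvPolynomial (Fin n) ℂ)) \ {0}),
      p = (fun i => (α i : ℝ), (u : ℝ))})
    (UI : Set ((Fin n → ℝ) × ℝ × ℝ))
    (hUI : UI = {p | ∃ s t : ℕ, ∃ α ∈ v ''
        ((⇑(dehom n) ''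
          ((idealComponent (I ^ t) s : Set (MvPolynomial (Fin (n + 1)) ℂ)))) \ {0}),
      p = (fun i => (α i : ℝ), (s : ℝ), (t : ℝ))})
    (Hq : Set ((Fin n → ℝ) × ℝ × ℝ))
    (hHq : Hq = {p | p.2.1 = ((b : ℝ) / (a : ℝ)) * p.2.2}) :
    Set.BijOn (fun p : (Fin n → ℝ) × ℝ => (p.1, (b : ℝ) * p.2, (a : ℝ) * p.2))
      Uab (UI ∩ Hq) := by
  have hpow : ∀ u : ℕ, ⇑(dehom n) '' (idealComponent (I ^ (a * u)) (b * u) : Set _) =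
      (L ^ u : Submodule ℂ (MvPolynomial (Fin n) ℂ)) := by
    intro u
    rw [hL, ← Submodule.map_pow, idealComponent_eq_degreePart, idealComponent_eq_degreePart,
      pow_mul, ← (IsGeneratedInDegreeLE.pow hI a).degreePart_pow hq.le u,
      Submodule.map_coe]
    rfl
  have haR : (a : ℝ) ≠ 0 := Nat.cast_ne_zero.mpr ha.ne'
  subst hUab hUI hHq
  refine ⟨?_, ?_, ?_⟩
  · rintro _ ⟨u, α, hα, rfl⟩
    refine ⟨⟨b * u, a * u, α, hpow u ▸ hα, by push_cast; rfl⟩, ?_⟩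
    change (b : ℝ) * u = b / a * (a * u)
    field_simp
  · rintro ⟨α, x⟩ _ ⟨β, y⟩ _ h
    simp only [Prod.mk.injEq] at h
    rw [h.1, mul_left_cancel₀ haR h.2.2]
  · rintro _ ⟨⟨s, t, α, hα, rfl⟩, hslope⟩
    change (s : ℝ) = b / a * t at hslope
    have hst : s * a = b * t := by
      exact_mod_cast (show (s : ℝ) * a = b * t by rw [hslope]; field_simp)
    obtain ⟨u, rfl, rfl⟩ := hab.exists_eq_mul_of_mul_eq_mul ha hst
    exact ⟨_, ⟨u, α, hpow u ▸ hα, rfl⟩, by push_cast; rfl⟩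

/-- Let `I ⊆ ℂ[x₀,…,xₙ]` be a homogeneous ideal generated in degrees `≤ d`,
`v` any `ℤⁿ`-valued function on `ℂ[x₁,…,xₙ]`, and `a, b` coprime positive integers with
`b > d·a`, `q = b/a`. With `L = ((I^a)_b)|_{x₀=1}`,
`U_{a,b} = {(α,u) : u ∈ ℤ_{≥0}, α ∈ v(Lᵘ ∖ {0})}`,
`U_I = {(α,s,t) : s,t ∈ ℤ_{≥0}, α ∈ v(((Iᵗ)_s)|_{x₀=1} ∖ {0})}`, and
`H_q = {(α,s,t) : s = q·t}`, the map `(α,u) ↦ (α, b·u, a·u)` is a bijection from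
`U_{a,b}` onto `U_I ∩ H_q`. -/
theorem graded_semigroup_slice_bijection (n d : ℕ)
    (I : Ideal (MvPolynomial (Fin (n + 1)) ℂ))
    (hI : ∃ S : Set (MvPolynomial (Fin (n + 1)) ℂ),
      (∀ f ∈ S, ∃ e ≤ d, f.IsHomogeneous e) ∧ I = Ideal.span S)
    (v : MvPolynomial (Fin n) ℂ → (Fin n → ℤ))
    (a b : ℕ) (ha : 0 < a) (hb : 0 < b) (hab : Nat.Coprime a b) (hq : d * a < b)
    (L : Submodule ℂ (MvPolynomial (Fin n) ℂ))
    (hL : L = Submodule.map (dehom n).toLinearMap (idealComponent (I ^ a) b))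
    (Uab : Set ((Fin n → ℝ) × ℝ))
    (hUab : Uab = {p | ∃ u : ℕ, ∃ α ∈ v ''
        (((L ^ u : Submodule ℂ (MvPolynomial (Fin n) ℂ)) : Set (MvPolynomial (Fin n) ℂ)) \ {0}),
      p = (fun i => (α i : ℝ), (u : ℝ))})
    (UI : Set ((Fin n → ℝ) × ℝ × ℝ))
    (hUI : UI = {p | ∃ s t : ℕ, ∃ α ∈ v ''
        ((⇑(dehom n) ''
          ((idealComponent (I ^ t) s : Set (MvPolynomial (Fin (n + 1)) ℂ)))) \ {0}),
      p = (fun i => (α i : ℝ), (s : ℝ), (t : ℝ))})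
    (Hq : Set ((Fin n → ℝ) × ℝ × ℝ))
    (hHq : Hq = {p | p.2.1 = ((b : ℝ) / (a : ℝ)) * p.2.2}) :
    Set.BijOn (fun p : (Fin n → ℝ) × ℝ => (p.1, (b : ℝ) * p.2, (a : ℝ) * p.2))
      Uab (UI ∩ Hq) :=
  graded_semigroup_slice_bijection_general n d I hI v a b ha hab hq L hL Uab hUab UI hUI Hq hHq
end
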